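/- Fix a nonnegative integer k and a nonnegative real ω. The property 'th^ω_Z(G) < |V(G)| − k' is preserved under taking induced supergraphs: if G is an induced subgraph of H and th^ω_Z(G) < |V(G)| − k, then th^ω_Z(H) < |V(H)| − k. -/

import Mathlib

/-!
Let `φ : G ↪g H` and let `B` be a zero forcing set of `G`. Colour blue the image of `B` together
with every vertex of `H` outside the image of `φ`. In each round, a blue vertex `φ u` whose forcing
`u → v` is available in `G` still has `φ v` as its only white neighbour in `H`, since the vertices
outside `φ`'s image are already blue and `φ` is induced. So after `pt(G; B)` rounds all of `H` is
blue, and the new set has `|V(H)| - |V(G)|` more vertices than `B` and no larger propagation time.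
-/

open SimpleGraph Set

/-- `v` can force `w` under the standard color change rule given blue set `B`. -/
def canForce {V : Type*} (G : SimpleGraph V) (B : Set V) (v w : V) : Prop :=
  v ∈ B ∧ w ∉ B ∧ G.Adj v w ∧ ∀ u, G.Adj v u → u ∉ B → u = w

/-- One simultaneous round of standard zero forcing. -/
def zfStep {V : Type*} (G : SimpleGraph V) (B : Set V) : Set V :=
  B ∪ {w | ∃ v, canForce G B v w}

/-- The blue set after `t` simultaneous rounds. -/
def zfIter {V : Type*} (G : SimpleGraph V) (B : Set V) : ℕ → Set V
  | 0 => B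
  | t + 1 => zfStep G (zfIter G B t)

/-- `B` is a standard zero forcing set of `G`. -/
def IsZFS {V : Type*} (G : SimpleGraph V) (B : Set V) : Prop :=
  ∃ t, zfIter G B t = Set.univ

/-- Propagation time of `B` in `G`. -/
noncomputable def zfpt {V : Type*} (G : SimpleGraph V) (B : Set V) : ℕ :=
  sInf {t | zfIter G B t = Set.univ}

/-- Weighted standard throttling number. -/
noncomputable def thw {V : Type*} (G : SimpleGraph V) (ω : ℝ) : ℝ :=
  sInf {x : ℝ | ∃ B : Set V, IsZFS G B ∧ x = (B.ncard : ℝ) + ω * (zfpt G B : ℝ)}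

section Forcing

variable {V W : Type*} (G : SimpleGraph V) (H : SimpleGraph W)

lemma isZFS_univ : IsZFS G univ := ⟨0, rfl⟩

lemma IsZFS.zfIter_zfpt {G : SimpleGraph V} {B : Set V} (hB : IsZFS G B) :
    zfIter G B (zfpt G B) = univ :=
  Nat.sInf_mem hB

lemma zfpt_le_of_zfIter_eq_univ {B : Set V} {t : ℕ} (ht : zfIter G B t = univ) :
    zfpt G B ≤ t :=
  Nat.sInf_le ht

variable {G H}

def extendBlue (φ : G ↪g H) (B : Set V) : Set W :=
  φ '' B ∪ (range φ)ᶜ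

lemma image_zfIter_union_compl_range_subset (φ : G ↪g H) (B : Set V) (t : ℕ) :
    φ '' zfIter G B t ∪ (range φ)ᶜ ⊆ zfIter H (extendBlue φ B) t := by
  induction t with
  | zero => exact subset_rfl
  | succ t ih =>
    rintro w (⟨v, hv | ⟨u, hu_blue, -, huv, hu_unique⟩, rfl⟩ | hw)
    · exact Or.inl (ih (Or.inl ⟨v, hv, rfl⟩))
    · by_cases hφv : φ v ∈ zfIter H (extendBlue φ B) t
      · exact Or.inl hφv
      refine Or.inr ⟨φ u, ih (Or.inl ⟨u, hu_blue, rfl⟩), hφv, φ.map_adj_iff.mpr huv, ?_⟩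
      intro x hx hx_white
      obtain ⟨x, rfl⟩ : x ∈ range φ := by_contra fun hc => hx_white (ih (Or.inr hc))
      rw [hu_unique x (φ.map_adj_iff.mp hx) fun hxB => hx_white (ih (Or.inl ⟨x, hxB, rfl⟩))]
    · exact Or.inl (ih (Or.inr hw))

lemma zfIter_extendBlue_eq_univ (φ : G ↪g H) {B : Set V} {t : ℕ}
    (ht : zfIter G B t = univ) : zfIter H (extendBlue φ B) t = univ := by
  refine eq_univ_of_forall fun w => image_zfIter_union_compl_range_subset φ B t ?_
  by_cases hw : w ∈ range φ
  · obtain ⟨v, rfl⟩ := hw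
    exact Or.inl ⟨v, ht ▸ mem_univ v, rfl⟩
  · exact Or.inr hw

lemma isZFS_extendBlue (φ : G ↪g H) {B : Set V} (hB : IsZFS G B) :
    IsZFS H (extendBlue φ B) :=
  ⟨_, zfIter_extendBlue_eq_univ φ hB.zfIter_zfpt⟩

lemma zfpt_extendBlue_le (φ : G ↪g H) {B : Set V} (hB : IsZFS G B) :
    zfpt H (extendBlue φ B) ≤ zfpt G B :=
  zfpt_le_of_zfIter_eq_univ H (zfIter_extendBlue_eq_univ φ hB.zfIter_zfpt)

lemma ncard_extendBlue_add [Finite W] (φ : G ↪g H) (B : Set V) :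
    (extendBlue φ B).ncard + Nat.card V = B.ncard + Nat.card W := by
  have hrange : (range φ).ncard = Nat.card V := by
    rw [← Nat.card_coe_set_eq, Nat.card_range_of_injective φ.injective]
  rw [extendBlue, ncard_union_eq (disjoint_compl_right_iff_subset.mpr (image_subset_range φ B)),
    ncard_image_of_injective _ φ.injective, ← ncard_add_ncard_compl (range φ), hrange]
  ring

end Forcing

section Throttling

variable {V : Type*} {G : SimpleGraph V} {ω : ℝ}

lemma bddBelow_throttlingCosts (hω : 0 ≤ ω) :
    BddBelow {x : ℝ | ∃ B : Set V, IsZFS G B ∧ x = B.ncard + ω * zfpt G B} := by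
  refine ⟨0, ?_⟩
  rintro _ ⟨C, -, rfl⟩
  positivity

lemma thw_le (hω : 0 ≤ ω) {B : Set V} (hB : IsZFS G B) :
    thw G ω ≤ B.ncard + ω * zfpt G B :=
  csInf_le (bddBelow_throttlingCosts hω) ⟨B, hB, rfl⟩

lemma exists_isZFS_lt_of_thw_lt (hω : 0 ≤ ω) {c : ℝ} (h : thw G ω < c) :
    ∃ B, IsZFS G B ∧ (B.ncard : ℝ) + ω * zfpt G B < c := by
  obtain ⟨_, ⟨B, hB, rfl⟩, hlt⟩ :=
    (csInf_lt_iff (bddBelow_throttlingCosts hω) ⟨_, univ, isZFS_univ G, rfl⟩).mp h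
  exact ⟨B, hB, hlt⟩

end Throttling

theorem thw_preserved_induced_supergraph {V W : Type*} [Fintype V] [Fintype W]
    (G : SimpleGraph V) (H : SimpleGraph W) (φ : G ↪g H)
    (ω : ℝ) (hω : 0 ≤ ω) (k : ℤ)
    (h : thw G ω < (Fintype.card V : ℝ) - (k : ℝ)) :
    thw H ω < (Fintype.card W : ℝ) - (k : ℝ) := by
  obtain ⟨B, hB, hlt⟩ := exists_isZFS_lt_of_thw_lt hω h
  have hcard : ((extendBlue φ B).ncard : ℝ) + Fintype.card V = B.ncard + Fintype.card W := by
    have := ncard_extendBlue_add φ B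
    rw [Nat.card_eq_fintype_card, Nat.card_eq_fintype_card] at this
    exact_mod_cast this
  have hpt : ω * zfpt H (extendBlue φ B) ≤ ω * zfpt G B :=
    mul_le_mul_of_nonneg_left (by exact_mod_cast zfpt_extendBlue_le φ hB) hω
  linarith [thw_le hω (isZFS_extendBlue φ hB)]
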